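/- In the algebra 𝔸, any double commutator two of whose three entries lie in c·𝔸 vanishes: for all x, y, z ∈ 𝔸, [[c·x, z], c·y] = 0 and [[c·x, c·y], z] = 0, where c := a·b − b·a and [p,q] := pq − qp. -/

import Mathlib

noncomputable section

/-- The first generator of the free algebra on two generators. -/
def Agen (K : Type*) [Field K] : FreeAlgebra K (Fin 2) := FreeAlgebra.ι K 0

/-- The second generator of the free algebra on two generators. -/
def Bgen (K : Type*) [Field K] : FreeAlgebra K (Fin 2) := FreeAlgebra.ι K 1

/-- The relations `a·a·b = a·b·a` and `b·b·a = b·a·b`. -/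
inductive ARel (K : Type*) [Field K] :
    FreeAlgebra K (Fin 2) → FreeAlgebra K (Fin 2) → Prop
  | aab : ARel K (Agen K * Agen K * Bgen K) (Agen K * Bgen K * Agen K)
  | bba : ARel K (Bgen K * Bgen K * Agen K) (Bgen K * Agen K * Bgen K)

/-- The algebra `𝔸`: the quotient of the free unital associative `K`-algebra on two
generators `a`, `b` by the two-sided ideal generated by `a·a·b − a·b·a` and
`b·b·a − b·a·b`. -/
abbrev AAlg (K : Type*) [Field K] := RingQuot (ARel K)

/-- The image of the generator `a` in `𝔸`. -/
def aA (K : Type*) [Field K] : AAlg K := RingQuot.mkAlgHom K (ARel K) (Agen K)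

/-- The image of the generator `b` in `𝔸`. -/
def bA (K : Type*) [Field K] : AAlg K := RingQuot.mkAlgHom K (ARel K) (Bgen K)

/-- The commutator `c := a·b − b·a` in `𝔸`. -/
def cA (K : Type*) [Field K] : AAlg K := aA K * bA K - bA K * aA K

/-!
The relations say exactly that `a·c = 0` and `b·c = 0`, so left multiplication by any element
acts on `c` through its constant term: `x·c ∈ K·c`. Since also `c·c = a·(b·c) − b·(a·c) = 0`,
this gives `c·𝔸·c = 0`. Expanding either double commutator, every monomial contains two factors
from `c·𝔸`, hence a subword `c·w·c`, and vanishes.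
-/

theorem lie_lie_mul_eq_zero_of_mul_mul_eq_zero {R : Type*} [Ring R] {c : R}
    (hc : ∀ w, c * w * c = 0) (x y z : R) :
    ⁅⁅c * x, z⁆, c * y⁆ = 0 ∧ ⁅⁅c * x, c * y⁆, z⁆ = 0 := by
  have hc₁ : ∀ u v, c * (u * (c * v)) = 0 := fun u v => by
    rw [← mul_assoc, ← mul_assoc, hc, zero_mul]
  have hc₂ : ∀ u w v, c * (u * (w * (c * v))) = 0 := fun u w v => by
    rw [← mul_assoc u, hc₁]
  constructor <;>
    simp only [Ring.lie_def, sub_mul, mul_sub, mul_assoc, hc₁, hc₂, mul_zero, zero_mul, sub_self]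

lemma aA_mul_cA (K : Type*) [Field K] : aA K * cA K = 0 := by
  have h := RingQuot.mkAlgHom_rel K (ARel.aab (K := K))
  simp only [cA, aA, bA, mul_sub, ← map_mul, ← mul_assoc] at h ⊢
  rw [h, sub_self]

lemma bA_mul_cA (K : Type*) [Field K] : bA K * cA K = 0 := by
  have h := RingQuot.mkAlgHom_rel K (ARel.bba (K := K))
  simp only [cA, aA, bA, mul_sub, ← map_mul, ← mul_assoc] at h ⊢
  rw [h, sub_self]

lemma cA_mul_cA (K : Type*) [Field K] : cA K * cA K = 0 := by
  nth_rewrite 1 [cA]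
  rw [sub_mul, mul_assoc, mul_assoc, aA_mul_cA, bA_mul_cA, mul_zero, mul_zero, sub_self]

lemma exists_mul_cA_eq_smul_cA (K : Type*) [Field K] (x : AAlg K) :
    ∃ r : K, x * cA K = r • cA K := by
  obtain ⟨p, rfl⟩ := RingQuot.mkAlgHom_surjective K (ARel K) x
  induction p using FreeAlgebra.induction with
  | grade0 r => exact ⟨r, by rw [AlgHom.commutes, Algebra.algebraMap_eq_smul_one, smul_one_mul]⟩
  | grade1 i =>
    refine ⟨0, ?_⟩
    rw [zero_smul]
    fin_cases i
    exacts [aA_mul_cA K, bA_mul_cA K]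
  | mul p q hp hq =>
    obtain ⟨r, hr⟩ := hp
    obtain ⟨s, hs⟩ := hq
    exact ⟨r * s, by rw [map_mul, mul_assoc, hs, mul_smul_comm, hr, smul_smul, mul_comm s r]⟩
  | add p q hp hq =>
    obtain ⟨r, hr⟩ := hp
    obtain ⟨s, hs⟩ := hq
    exact ⟨r + s, by rw [map_add, add_mul, hr, hs, add_smul]⟩

lemma cA_mul_mul_cA (K : Type*) [Field K] (x : AAlg K) : cA K * x * cA K = 0 := by
  obtain ⟨r, hr⟩ := exists_mul_cA_eq_smul_cA K x
  rw [mul_assoc, hr, mul_smul_comm, cA_mul_cA, smul_zero]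

theorem stmt_15_general (K : Type*) [Field K] (x y z : AAlg K) :
    ((cA K * x) * z - z * (cA K * x)) * (cA K * y)
        - (cA K * y) * ((cA K * x) * z - z * (cA K * x)) = 0 ∧
    ((cA K * x) * (cA K * y) - (cA K * y) * (cA K * x)) * z
        - z * ((cA K * x) * (cA K * y) - (cA K * y) * (cA K * x)) = 0 := by
  simpa only [Ring.lie_def] using
    lie_lie_mul_eq_zero_of_mul_mul_eq_zero (cA_mul_mul_cA K) x y z

/-- In `𝔸`, any double commutator two of whose three entries lie in `c·𝔸`
vanishes: `[[c·x, z], c·y] = 0` and `[[c·x, c·y], z] = 0`. -/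
theorem stmt_15 (K : Type*) [Field K] [CharZero K] (x y z : AAlg K) :
    ((cA K * x) * z - z * (cA K * x)) * (cA K * y)
        - (cA K * y) * ((cA K * x) * z - z * (cA K * x)) = 0 ∧
    ((cA K * x) * (cA K * y) - (cA K * y) * (cA K * x)) * z
        - z * ((cA K * x) * (cA K * y) - (cA K * y) * (cA K * x)) = 0 :=
  stmt_15_general K x y z
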